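/- Let n ≥ 5, a ∈ ℝ with a > 0, and A ∈ ℝ. Let h(x) = a|x|^{4-n} + A for x ∈ ℝ^n \ {0}. Then the Pohozaev boundary integral P(γ) = ∫_{|x|=γ} [ ((n-4)/2)(h ∂_ν(Δh) − Δh ∂_ν h) + (x·∇h)∂_ν(Δh) − ∂_ν(x·∇h)Δh + (1/2)(Δh)^2 x·ν ] ds satisfies lim_{γ → 0^+} P(γ) = (n-4)^2 (n-2) a A |S^{n-1}|, where |S^{n-1}| is the surface area of the unit sphere in ℝ^n. -/

import Mathlib

open scoped RealInnerProductSpace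
open MeasureTheory Metric

/-- The Euclidean Laplacian of a real-valued function on `ℝⁿ`. -/
noncomputable def laplacian {n : ℕ} (f : EuclideanSpace ℝ (Fin n) → ℝ)
    (x : EuclideanSpace ℝ (Fin n)) : ℝ :=
  ∑ i : Fin n, iteratedFDeriv ℝ 2 f x ![EuclideanSpace.single i 1, EuclideanSpace.single i 1]

/-- The normal derivative `∂_ν f (x) = df_x(x/‖x‖)` with respect to the outward normal of the
sphere centered at the origin through `x`. -/
noncomputable def normalDeriv {n : ℕ} (f : EuclideanSpace ℝ (Fin n) → ℝ)
    (x : EuclideanSpace ℝ (Fin n)) : ℝ :=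
  fderiv ℝ f x (‖x‖⁻¹ • x)

/-- The Pohozaev boundary integrand for a function `h`. -/
noncomputable def pohozaevIntegrand {n : ℕ} (h : EuclideanSpace ℝ (Fin n) → ℝ)
    (x : EuclideanSpace ℝ (Fin n)) : ℝ :=
  (((n : ℝ) - 4) / 2) * (h x * normalDeriv (laplacian h) x - laplacian h x * normalDeriv h x)
    + ⟪x, gradient h x⟫ * normalDeriv (laplacian h) x
    - normalDeriv (fun z => ⟪z, gradient h z⟫) x * laplacian h x
    + (1 / 2) * (laplacian h x) ^ 2 * ⟪x, ‖x‖⁻¹ • x⟫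


/-!
For `g = b‖x‖ ^ p + C` away from the origin one has `∂_ν g = b p ‖x‖ ^ (p - 1)`,
`x · ∇g = b p ‖x‖ ^ p` and `Δg = b p (p + n - 2) ‖x‖ ^ (p - 2)`; the last two are again of this
shape, so every term of the Pohozaev integrand of `h = a‖x‖ ^ (4 - n) + A` is an explicit power
of `‖x‖`. For `p = 4 - n` the terms quadratic in `a` cancel and the integrand is exactly
`(n - 4)² (n - 2) a A ‖x‖ ^ (1 - n)`; the factor `γ ^ (n - 1)` from polar coordinates cancels
this power, so `P` is constant on `(0, ∞)`.
-/

section RadialPower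

variable {E : Type*} [NormedAddCommGroup E] [InnerProductSpace ℝ E]

theorem hasFDerivAt_norm_rpow_of_ne_zero (p : ℝ) {x : E} (hx : x ≠ 0) :
    HasFDerivAt (fun y : E ↦ ‖y‖ ^ p) ((p * ‖x‖ ^ (p - 2)) • innerSL ℝ x) x := by
  apply HasStrictFDerivAt.hasFDerivAt
  convert (hasStrictFDerivAt_norm_sq x).rpow_const (p := p / 2) (by simp [hx]) using 1
  · ext y
    rw [← Real.rpow_natCast_mul (norm_nonneg y), Nat.cast_ofNat, mul_div_cancel₀ _ two_ne_zero]
  · simp_rw [← Real.rpow_natCast_mul (norm_nonneg x), ← Nat.cast_smul_eq_nsmul ℝ, smul_smul]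
    ring_nf

variable {g : E → ℝ} {b p C : ℝ}

theorem hasFDerivAt_of_eq_mul_norm_rpow_add (hg : ∀ y, y ≠ 0 → g y = b * ‖y‖ ^ p + C)
    {x : E} (hx : x ≠ 0) :
    HasFDerivAt g ((b * p * ‖x‖ ^ (p - 2)) • innerSL ℝ x) x := by
  have hev : (fun y ↦ b * ‖y‖ ^ p + C) =ᶠ[nhds x] g :=
    eventually_ne_nhds hx |>.mono fun y hy ↦ (hg y hy).symm
  refine ((((hasFDerivAt_norm_rpow_of_ne_zero p hx).const_mul b).add_const C).congr_of_eventuallyEq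
    hev.symm).congr_fderiv ?_
  rw [smul_smul, mul_assoc]

theorem gradient_of_eq_mul_norm_rpow_add [CompleteSpace E]
    (hg : ∀ y, y ≠ 0 → g y = b * ‖y‖ ^ p + C) {x : E} (hx : x ≠ 0) :
    gradient g x = (b * p * ‖x‖ ^ (p - 2)) • x := by
  refine HasGradientAt.gradient ?_
  rw [hasGradientAt_iff_hasFDerivAt, map_smul]
  exact hasFDerivAt_of_eq_mul_norm_rpow_add hg hx

theorem inner_gradient_of_eq_mul_norm_rpow_add [CompleteSpace E]
    (hg : ∀ y, y ≠ 0 → g y = b * ‖y‖ ^ p + C) {x : E} (hx : x ≠ 0) :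
    ⟪x, gradient g x⟫ = b * p * ‖x‖ ^ p := by
  have hr : 0 < ‖x‖ := norm_pos_iff.mpr hx
  rw [gradient_of_eq_mul_norm_rpow_add hg hx, real_inner_smul_right, real_inner_self_eq_norm_sq,
    ← Real.rpow_natCast, mul_assoc, ← Real.rpow_add hr]
  norm_num

end RadialPower

section Euclidean

variable {n : ℕ} {g : EuclideanSpace ℝ (Fin n) → ℝ}

theorem laplacian_eq_of_fderiv_eventuallyEq_smul_innerSL {φ : EuclideanSpace ℝ (Fin n) → ℝ}
    {φ' : EuclideanSpace ℝ (Fin n) →L[ℝ] ℝ} {x : EuclideanSpace ℝ (Fin n)}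
    (hg : fderiv ℝ g =ᶠ[nhds x] fun y ↦ φ y • innerSL ℝ y) (hφ : HasFDerivAt φ φ' x) :
    laplacian g x = φ' x + n * φ x := by
  have hsecond := hg.fderiv_eq.trans (hφ.smul (innerSL ℝ).hasFDerivAt).fderiv
  have hφ'x : φ' x = ∑ i, φ' (EuclideanSpace.single i 1) * x i := by
    conv_lhs => rw [← (EuclideanSpace.basisFun (Fin n) ℝ).sum_repr x]
    simp [mul_comm]
  have hsingle : ∀ i : Fin n,
      innerSL ℝ (EuclideanSpace.single i (1 : ℝ)) (EuclideanSpace.single i 1) = 1 :=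
    fun i ↦ by simp
  have hcoord : ∀ i : Fin n, innerSL ℝ x (EuclideanSpace.single i (1 : ℝ)) = x i :=
    fun i ↦ by simp [EuclideanSpace.inner_single_right]
  simp [laplacian, iteratedFDeriv_two_apply, hsecond, hφ'x, Finset.sum_add_distrib, add_comm,
    hsingle, hcoord]

variable {b p C : ℝ}

theorem normalDeriv_of_eq_mul_norm_rpow_add (hg : ∀ y, y ≠ 0 → g y = b * ‖y‖ ^ p + C)
    {x : EuclideanSpace ℝ (Fin n)} (hx : x ≠ 0) :
    normalDeriv g x = b * p * ‖x‖ ^ (p - 1) := by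
  have hr : 0 < ‖x‖ := norm_pos_iff.mpr hx
  rw [normalDeriv, (hasFDerivAt_of_eq_mul_norm_rpow_add hg hx).fderiv]
  simp only [FunLike.coe_smul, Pi.smul_apply, innerSL_apply_apply,
    real_inner_smul_right, real_inner_self_eq_norm_sq, smul_eq_mul]
  rw [show p - 1 = (p - 2) + 1 by ring, Real.rpow_add_one hr.ne']
  field_simp

theorem laplacian_of_eq_mul_norm_rpow_add (hg : ∀ y, y ≠ 0 → g y = b * ‖y‖ ^ p + C)
    {x : EuclideanSpace ℝ (Fin n)} (hx : x ≠ 0) :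
    laplacian g x = b * p * (p + n - 2) * ‖x‖ ^ (p - 2) := by
  have hr : 0 < ‖x‖ := norm_pos_iff.mpr hx
  have hfd : fderiv ℝ g =ᶠ[nhds x] fun y ↦ (b * p * ‖y‖ ^ (p - 2)) • innerSL ℝ y :=
    eventually_ne_nhds hx |>.mono fun y hy ↦ (hasFDerivAt_of_eq_mul_norm_rpow_add hg hy).fderiv
  have hφ := hasFDerivAt_of_eq_mul_norm_rpow_add (g := fun y ↦ b * p * ‖y‖ ^ (p - 2))
    (C := 0) (fun y _ ↦ (add_zero _).symm) hx
  rw [laplacian_eq_of_fderiv_eventuallyEq_smul_innerSL hfd hφ]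
  simp only [FunLike.coe_smul, Pi.smul_apply, innerSL_apply_apply,
    real_inner_self_eq_norm_sq, smul_eq_mul]
  have hpow : ‖x‖ ^ (p - 2) = ‖x‖ ^ (p - 2 - 2) * ‖x‖ ^ 2 := by
    rw [← Real.rpow_natCast, ← Real.rpow_add hr]
    norm_num
  rw [hpow]
  ring

end Euclidean

theorem pohozaevIntegrand_of_eq_mul_norm_rpow_add {n : ℕ} {a A : ℝ}
    {h : EuclideanSpace ℝ (Fin n) → ℝ}
    (hh : ∀ x : EuclideanSpace ℝ (Fin n), x ≠ 0 → h x = a * ‖x‖ ^ (4 - (n : ℝ)) + A)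
    {x : EuclideanSpace ℝ (Fin n)} (hx : x ≠ 0) :
    pohozaevIntegrand h x = ((n : ℝ) - 4) ^ 2 * ((n : ℝ) - 2) * a * A * ‖x‖ ^ (1 - (n : ℝ)) := by
  have hr : 0 < ‖x‖ := norm_pos_iff.mpr hx
  have hΔ : ∀ y, y ≠ 0 → laplacian h y
      = a * (4 - n) * (4 - n + n - 2) * ‖y‖ ^ (4 - (n : ℝ) - 2) + 0 :=
    fun y hy ↦ (laplacian_of_eq_mul_norm_rpow_add hh hy).trans (add_zero _).symm
  have hX : ∀ y, y ≠ 0 → ⟪y, gradient h y⟫ = a * (4 - n) * ‖y‖ ^ (4 - (n : ℝ)) + 0 :=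
    fun y hy ↦ (inner_gradient_of_eq_mul_norm_rpow_add hh hy).trans (add_zero _).symm
  have hxν : ⟪x, ‖x‖⁻¹ • x⟫ = ‖x‖ := by
    rw [real_inner_smul_right, real_inner_self_eq_norm_sq]
    field_simp
  rw [pohozaevIntegrand, hh x hx, hΔ x hx, hX x hx, normalDeriv_of_eq_mul_norm_rpow_add hh hx,
    normalDeriv_of_eq_mul_norm_rpow_add hΔ hx, normalDeriv_of_eq_mul_norm_rpow_add hX hx, hxν]
  -- every power of `‖x‖` that occurs is `‖x‖ ^ (1 - n)` times a natural power
  have hpow : ∀ (q : ℝ) (k : ℕ), q = 1 - n + k → ‖x‖ ^ q = ‖x‖ ^ (1 - (n : ℝ)) * ‖x‖ ^ k := by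
    rintro q k rfl
    rw [Real.rpow_add hr, Real.rpow_natCast]
  rw [hpow (4 - n) 3 (by push_cast; ring), hpow (4 - n - 1) 2 (by push_cast; ring),
    hpow (4 - n - 2) 1 (by push_cast; ring), hpow (4 - n - 2 - 1) 0 (by push_cast; ring)]
  ring

theorem stmt_10_general (n : ℕ) (a A : ℝ)
    (h : EuclideanSpace ℝ (Fin n) → ℝ)
    (hh : ∀ x : EuclideanSpace ℝ (Fin n), x ≠ 0 → h x = a * ‖x‖ ^ (4 - (n : ℝ)) + A)
    (P : ℝ → ℝ)
    (hP : ∀ γ : ℝ, 0 < γ → P γ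
      = γ ^ ((n : ℝ) - 1) * ∫ ω : sphere (0 : EuclideanSpace ℝ (Fin n)) 1,
          pohozaevIntegrand h (γ • (ω : EuclideanSpace ℝ (Fin n)))
          ∂((volume : Measure (EuclideanSpace ℝ (Fin n))).toSphere)) :
    Filter.Tendsto P (nhdsWithin 0 (Set.Ioi 0))
      (nhds (((n : ℝ) - 4) ^ 2 * ((n : ℝ) - 2) * a * A
        * (((volume : Measure (EuclideanSpace ℝ (Fin n))).toSphere Set.univ).toReal))) := by
  set K := ((n : ℝ) - 4) ^ 2 * ((n : ℝ) - 2) * a * A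
  set S := ((volume : Measure (EuclideanSpace ℝ (Fin n))).toSphere Set.univ).toReal
  have hconst : ∀ γ : ℝ, 0 < γ → P γ = K * S := by
    intro γ hγ
    have hnorm : ∀ ω : sphere (0 : EuclideanSpace ℝ (Fin n)) 1,
        ‖γ • (ω : EuclideanSpace ℝ (Fin n))‖ = γ :=
      fun ω ↦ by rw [norm_smul, norm_eq_of_mem_sphere, Real.norm_of_nonneg hγ.le, mul_one]
    have hintegrand : ∀ ω : sphere (0 : EuclideanSpace ℝ (Fin n)) 1,
        pohozaevIntegrand h (γ • (ω : EuclideanSpace ℝ (Fin n))) = K * γ ^ (1 - (n : ℝ)) := by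
      intro ω
      have hne : γ • (ω : EuclideanSpace ℝ (Fin n)) ≠ 0 := norm_pos_iff.mp (by rw [hnorm]; exact hγ)
      rw [pohozaevIntegrand_of_eq_mul_norm_rpow_add hh hne, hnorm]
    have hscale : γ ^ ((n : ℝ) - 1) * γ ^ (1 - (n : ℝ)) = 1 := by
      rw [← Real.rpow_add hγ, sub_add_sub_cancel', sub_self, Real.rpow_zero]
    rw [hP γ hγ, integral_congr_ae (.of_forall hintegrand), integral_const, smul_eq_mul,
      measureReal_def]
    linear_combination K * S * hscale
  exact tendsto_const_nhds.congr' (eventually_nhdsWithin_of_forall fun γ hγ ↦ (hconst γ hγ).symm)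

theorem stmt_10 (n : ℕ) (hn : 5 ≤ n) (a A : ℝ) (ha : 0 < a)
    (h : EuclideanSpace ℝ (Fin n) → ℝ)
    (hh : ∀ x : EuclideanSpace ℝ (Fin n), x ≠ 0 → h x = a * ‖x‖ ^ (4 - (n : ℝ)) + A)
    (P : ℝ → ℝ)
    (hP : ∀ γ : ℝ, 0 < γ → P γ
      = γ ^ ((n : ℝ) - 1) * ∫ ω : sphere (0 : EuclideanSpace ℝ (Fin n)) 1,
          pohozaevIntegrand h (γ • (ω : EuclideanSpace ℝ (Fin n)))
          ∂((volume : Measure (EuclideanSpace ℝ (Fin n))).toSphere)) :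
    Filter.Tendsto P (nhdsWithin 0 (Set.Ioi 0))
      (nhds (((n : ℝ) - 4) ^ 2 * ((n : ℝ) - 2) * a * A
        * (((volume : Measure (EuclideanSpace ℝ (Fin n))).toSphere Set.univ).toReal))) :=
  stmt_10_general n a A h hh P hP
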